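/- arXiv:1910.05269 — 7 statements merged into one kernel-verified Lean document; each statement's English description precedes it below -/
import Mathlib

section
/- Let f_j(z) = z^j for 0 ≤ j ≤ N, let K = (K₁,K₂) ∈ ℝ², and let z ∈ ℂ with |z| < 1. Writing B(z) = 1/(1 − |z|²), the density function satisfies lim_{N→∞} h_{N,K}(z) = (1/π) · exp(−(K₁²+K₂²)/(2·B(z))) · B(z) · [ B(z) + ((K₁²+K₂²)/2)·|z|² ]. -/
open Finset

/-- The kernel `B₀,N(z) = ∑ |f_j(z)|²`. -/
noncomputable def B0 (f : ℕ → ℂ → ℂ) (N : ℕ) (z : ℂ) : ℝ :=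
  ∑ j ∈ Finset.range (N + 1), ‖f j z‖ ^ 2

/-- The kernel `B₁,N(z) = ∑ conj(f_j(z))·f_j′(z)`. -/
noncomputable def B1 (f : ℕ → ℂ → ℂ) (N : ℕ) (z : ℂ) : ℂ :=
  ∑ j ∈ Finset.range (N + 1), (starRingEnd ℂ) (f j z) * deriv (f j) z

/-- The kernel `B₂,N(z) = ∑ |f_j′(z)|²`. -/
noncomputable def B2 (f : ℕ → ℂ → ℂ) (N : ℕ) (z : ℂ) : ℝ :=
  ∑ j ∈ Finset.range (N + 1), ‖deriv (f j) z‖ ^ 2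

/-- The density `h_{N,K}(z)` of complex zeros of `∑ η_j f_j(z) = K₁ + i K₂`. -/
noncomputable def hDen (f : ℕ → ℂ → ℂ) (N : ℕ) (K₁ K₂ : ℝ) (z : ℂ) : ℝ :=
  Real.exp (-(K₁ ^ 2 + K₂ ^ 2) / (2 * B0 f N z)) / (Real.pi * B0 f N z) *
    (B2 f N z - ‖B1 f N z‖ ^ 2 / B0 f N z *
      (1 - (K₁ ^ 2 + K₂ ^ 2) / (2 * B0 f N z)))


open Filter Topology

/-!
For `f_j(z) = z^j` and `ρ = |z|² < 1`, the kernels are partial sums of the series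
`∑ ρ^j = 1/(1-ρ)`, `|z|² (∑ j ρ^(j-1))² = ρ/(1-ρ)⁴` and `∑ j² ρ^(j-1) = (1+ρ)/(1-ρ)³`
(the last two from the binomial series `∑ (n+k).choose k ρ^n = 1/(1-ρ)^(k+1)`).
Since `h_{N,K}` depends continuously on `(B₀, |B₁|², B₂)` wherever `B₀ ≠ 0`,
the density converges to its value at these limits, which simplifies to the stated formula.
-/

section GeometricSeries

variable {𝕜 : Type*} [NormedField 𝕜] {r : 𝕜}

theorem HasSum.tendsto_sum_range_succ {α : Type*} [AddCommMonoid α] [TopologicalSpace α]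
    {f : ℕ → α} {a : α} (h : HasSum f a) :
    Tendsto (fun N ↦ ∑ j ∈ range (N + 1), f j) atTop (𝓝 a) :=
  h.tendsto_sum_nat.comp (tendsto_add_atTop_nat 1)

theorem hasSum_coe_mul_geometric_pred (hr : ‖r‖ < 1) :
    HasSum (fun n : ℕ ↦ (n : 𝕜) * r ^ (n - 1)) (1 / (1 - r) ^ 2) := by
  refine (hasSum_nat_add_iff' 1).mp ?_
  simpa using hasSum_choose_mul_geometric_of_norm_lt_one 1 hr

theorem hasSum_coe_sq_mul_geometric_pred (hr : ‖r‖ < 1) :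
    HasSum (fun n : ℕ ↦ (n : 𝕜) ^ 2 * r ^ (n - 1)) ((1 + r) / (1 - r) ^ 3) := by
  have hr1 : 1 - r ≠ 0 := sub_ne_zero.2 (ne_of_apply_ne norm (by simpa using hr.ne'))
  refine (hasSum_nat_add_iff' 1).mp ?_
  -- `(n + 1)² = 2 (n + 2).choose 2 - (n + 1).choose 1`
  convert! ((hasSum_choose_mul_geometric_of_norm_lt_one 2 hr).mul_left 2).sub
    (hasSum_choose_mul_geometric_of_norm_lt_one 1 hr) using 1
  · ext n
    have hchoose : ((n + 2).choose 2 : 𝕜) * 2 = (n + 2) * (n + 1) := by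
      have h : (n + 2).choose 2 * 2 = (n + 2) * (n + 1) := by
        rw [← Nat.add_one_mul_choose_eq (n + 1) 1, Nat.choose_one_right]
      exact_mod_cast congrArg (Nat.cast (R := 𝕜)) h
    simp only [Nat.choose_one_right, Nat.add_sub_cancel]
    push_cast
    linear_combination (-(r ^ n)) * hchoose
  · simp only [sum_range_one, Nat.cast_zero, zero_pow two_ne_zero, zero_mul, sub_zero]
    field_simp
    ring

end GeometricSeries

section Monomials

variable (N : ℕ) (z : ℂ)

theorem B0_pow : B0 (fun j w ↦ w ^ j) N z = ∑ j ∈ range (N + 1), (‖z‖ ^ 2) ^ j :=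
  sum_congr rfl fun j _ ↦ by rw [norm_pow, ← pow_mul, ← pow_mul, mul_comm]

theorem B1_pow : B1 (fun j w ↦ w ^ j) N z =
    (starRingEnd ℂ) z * ((∑ j ∈ range (N + 1), (j : ℝ) * (‖z‖ ^ 2) ^ (j - 1) : ℝ) : ℂ) := by
  rw [Complex.ofReal_sum, mul_sum]
  refine sum_congr rfl fun j _ ↦ ?_
  rcases j with _ | n
  · simp
  · simp only [deriv_pow_field, map_pow, Nat.add_sub_cancel]
    push_cast
    rw [← Complex.conj_mul']
    ring

theorem norm_B1_pow_sq : ‖B1 (fun j w ↦ w ^ j) N z‖ ^ 2 =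
    ‖z‖ ^ 2 * (∑ j ∈ range (N + 1), (j : ℝ) * (‖z‖ ^ 2) ^ (j - 1)) ^ 2 := by
  rw [B1_pow, norm_mul, mul_pow, Complex.norm_conj, Complex.norm_real, Real.norm_eq_abs, sq_abs]

theorem B2_pow : B2 (fun j w ↦ w ^ j) N z = ∑ j ∈ range (N + 1), (j : ℝ) ^ 2 * (‖z‖ ^ 2) ^ (j - 1) :=
  sum_congr rfl fun j _ ↦ by
    simp only [deriv_pow_field, norm_mul, norm_pow, Complex.norm_natCast]
    ring

variable {z}

theorem tendsto_B0_pow (hz : ‖z‖ < 1) :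
    Tendsto (fun N ↦ B0 (fun j w ↦ w ^ j) N z) atTop (𝓝 (1 / (1 - ‖z‖ ^ 2))) := by
  simp only [B0_pow, one_div]
  exact (hasSum_geometric_of_lt_one (by positivity) (by simpa using hz)).tendsto_sum_range_succ

theorem tendsto_norm_B1_pow_sq (hz : ‖z‖ < 1) :
    Tendsto (fun N ↦ ‖B1 (fun j w ↦ w ^ j) N z‖ ^ 2) atTop
      (𝓝 (‖z‖ ^ 2 * (1 / (1 - ‖z‖ ^ 2) ^ 2) ^ 2)) := by
  simp only [norm_B1_pow_sq]
  have hρ : ‖‖z‖ ^ 2‖ < 1 := by simpa using hz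
  exact ((hasSum_coe_mul_geometric_pred hρ).tendsto_sum_range_succ.pow 2).const_mul _

theorem tendsto_B2_pow (hz : ‖z‖ < 1) :
    Tendsto (fun N ↦ B2 (fun j w ↦ w ^ j) N z) atTop
      (𝓝 ((1 + ‖z‖ ^ 2) / (1 - ‖z‖ ^ 2) ^ 3)) := by
  simp only [B2_pow]
  have hρ : ‖‖z‖ ^ 2‖ < 1 := by simpa using hz
  exact (hasSum_coe_sq_mul_geometric_pred hρ).tendsto_sum_range_succ

end Monomials

theorem tendsto_hDen {f : ℕ → ℂ → ℂ} {l : Filter ℕ} {K₁ K₂ : ℝ} {z : ℂ} {b₀ b₁ b₂ : ℝ}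
    (h₀ : Tendsto (fun N ↦ B0 f N z) l (𝓝 b₀)) (h₁ : Tendsto (fun N ↦ ‖B1 f N z‖ ^ 2) l (𝓝 b₁))
    (h₂ : Tendsto (fun N ↦ B2 f N z) l (𝓝 b₂)) (hb₀ : b₀ ≠ 0) :
    Tendsto (fun N ↦ hDen f N K₁ K₂ z) l
      (𝓝 (Real.exp (-(K₁ ^ 2 + K₂ ^ 2) / (2 * b₀)) / (Real.pi * b₀) *
        (b₂ - b₁ / b₀ * (1 - (K₁ ^ 2 + K₂ ^ 2) / (2 * b₀))))) := by
  have h2b₀ : 2 * b₀ ≠ 0 := mul_ne_zero two_ne_zero hb₀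
  have hexp := (Real.continuous_exp.tendsto _).comp
    (tendsto_const_nhds.div (h₀.const_mul 2) h2b₀ (a := -(K₁ ^ 2 + K₂ ^ 2)))
  exact (hexp.div (h₀.const_mul _) (mul_ne_zero Real.pi_ne_zero hb₀)).mul
    (h₂.sub ((h₁.div h₀ hb₀).mul (tendsto_const_nhds.sub
      (tendsto_const_nhds.div (h₀.const_mul 2) h2b₀))))

/-- Theorem (limit for monomials, `|z| < 1`): with `f_j(z) = z^j` and
`B(z) = 1/(1-|z|²)`,
`lim_N h_{N,K}(z) = (1/π) e^{-(K₁²+K₂²)/(2B(z))} B(z) (B(z) + ((K₁²+K₂²)/2)|z|²)`. -/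
theorem density_limit_monomials (K₁ K₂ : ℝ) (z : ℂ) (hz : ‖z‖ < 1) :
    Tendsto (fun N : ℕ => hDen (fun j w => w ^ j) N K₁ K₂ z) atTop
      (𝓝 (1 / Real.pi *
        Real.exp (-(K₁ ^ 2 + K₂ ^ 2) / (2 * (1 / (1 - ‖z‖ ^ 2)))) *
        (1 / (1 - ‖z‖ ^ 2)) *
        (1 / (1 - ‖z‖ ^ 2) +
          (K₁ ^ 2 + K₂ ^ 2) / 2 * ‖z‖ ^ 2))) := by
  have hρ : 1 - ‖z‖ ^ 2 ≠ 0 := by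
    have : ‖z‖ ^ 2 < 1 := pow_lt_one₀ (norm_nonneg z) hz two_ne_zero
    linarith
  convert tendsto_hDen (K₁ := K₁) (K₂ := K₂) (tendsto_B0_pow hz) (tendsto_norm_B1_pow_sq hz)
    (tendsto_B2_pow hz) (one_div_ne_zero hρ) using 2
  field_simp
  ring
end

section
/- Let N be a positive integer, z ∈ ℂ with z ≠ 0, and write t = |z|². Then the following three closed forms hold for the kernels of the root-binomial functions f_j(z) = √(C(N,j)/(j+1))·z^j: Σ_{j=0}^N C(N,j)·t^j/(j+1) = ((t+1)^{N+1} − 1)/((N+1)·t); Σ_{j=0}^N C(N,j)·j·t^j/((j+1)·z) = ((N·t − 1)·(t+1)^N + 1)/((N+1)·z·t); and Σ_{j=0}^N C(N,j)·j²·t^{j−1}/(j+1) = ((t+1)^N·(t·(N²·t − N + 1) + 1) − t − 1)/((N+1)·t²·(t+1)), where C(N,j) denotes the binomial coefficient. -/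
/-!
Everything reduces to the binomial theorem `∑ C(n,j) t^j = (t+1)^n` and the absorption identity
`(n+1) C(n,j) = (j+1) C(n+1,j+1)`. Absorption turns `C(n,j) t^j / (j+1)` into
`C(n+1,j+1) t^(j+1) / ((n+1) t)`, which sums to `((t+1)^(n+1) - 1) / ((n+1) t)`, and turns
`j C(n,j)` into `n C(n-1,j-1)`, which gives `∑ j C(n,j) t^j = n t (t+1)^(n-1)`. The other two
kernels are combinations of these sums, since `j / (j+1) = 1 - 1/(j+1)` and
`j² / (j+1) = j - 1 + 1/(j+1)`.
-/

open Finset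

section CommSemiring

variable {R : Type*} [CommSemiring R]

theorem cast_add_one_mul_choose_eq (n j : ℕ) :
    ((n : R) + 1) * n.choose j = (n + 1).choose (j + 1) * ((j : R) + 1) := by
  simpa using congrArg (Nat.cast : ℕ → R) (Nat.add_one_mul_choose_eq n j)

theorem sum_range_choose_mul_pow (n : ℕ) (t : R) :
    ∑ j ∈ range (n + 1), (n.choose j : R) * t ^ j = (t + 1) ^ n := by
  rw [add_pow]
  exact sum_congr rfl fun j _ => by rw [one_pow, mul_one, mul_comm]

theorem sum_range_choose_succ_mul_pow_succ (n : ℕ) (t : R) :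
    ∑ j ∈ range (n + 1), ((n + 1).choose (j + 1) : R) * t ^ (j + 1) + 1 = (t + 1) ^ (n + 1) := by
  rw [← sum_range_choose_mul_pow, sum_range_succ' _ (n + 1)]
  simp

theorem add_one_mul_sum_range_choose_mul_mul_pow (n : ℕ) (t : R) :
    (t + 1) * ∑ j ∈ range (n + 1), (n.choose j : R) * j * t ^ j = n * t * (t + 1) ^ n := by
  cases n with
  | zero => simp
  | succ m =>
    have absorb : ∀ j ∈ range (m + 1),
        ((m + 1).choose (j + 1) : R) * ↑(j + 1) * t ^ (j + 1) =
          (m + 1) * t * ((m.choose j : R) * t ^ j) := fun j _ => by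
      calc ((m + 1).choose (j + 1) : R) * ↑(j + 1) * t ^ (j + 1)
          = ((m + 1).choose (j + 1) * ((j : R) + 1)) * t ^ (j + 1) := by push_cast; ring
        _ = (m + 1) * t * ((m.choose j : R) * t ^ j) := by
          rw [← cast_add_one_mul_choose_eq]; ring
    rw [sum_range_succ', sum_congr rfl absorb, ← mul_sum, sum_range_choose_mul_pow]
    push_cast
    ring

end CommSemiring

section Field

variable {K : Type*} [Field K] [CharZero K] {t : K}

theorem sum_range_choose_mul_pow_div_add_one (n : ℕ) (ht : t ≠ 0) :
    ∑ j ∈ range (n + 1), (n.choose j : K) * t ^ j / ((j : K) + 1) =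
      ((t + 1) ^ (n + 1) - 1) / (((n : K) + 1) * t) := by
  have absorb : ∀ j ∈ range (n + 1), (n.choose j : K) * t ^ j / ((j : K) + 1) =
      ((n + 1).choose (j + 1) : K) * t ^ (j + 1) / (((n : K) + 1) * t) := fun j _ => by
    have hj : (j : K) + 1 ≠ 0 := Nat.cast_add_one_ne_zero j
    have hn : (n : K) + 1 ≠ 0 := Nat.cast_add_one_ne_zero n
    field_simp
    linear_combination t ^ (j + 1) * cast_add_one_mul_choose_eq (R := K) n j
  rw [sum_congr rfl absorb, ← sum_div, ← sum_range_choose_succ_mul_pow_succ, add_sub_cancel_right]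

theorem sum_range_choose_mul_mul_pow_div_add_one (n : ℕ) (ht : t ≠ 0) :
    ∑ j ∈ range (n + 1), (n.choose j : K) * j * t ^ j / ((j : K) + 1) =
      (((n : K) * t - 1) * (t + 1) ^ n + 1) / (((n : K) + 1) * t) := by
  have split : ∀ j ∈ range (n + 1), (n.choose j : K) * j * t ^ j / ((j : K) + 1) =
      (n.choose j : K) * t ^ j - (n.choose j : K) * t ^ j / ((j : K) + 1) := fun j _ => by
    have hj : (j : K) + 1 ≠ 0 := Nat.cast_add_one_ne_zero j
    field_simp
    ring
  have hn : (n : K) + 1 ≠ 0 := Nat.cast_add_one_ne_zero n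
  rw [sum_congr rfl split, sum_sub_distrib, sum_range_choose_mul_pow,
    sum_range_choose_mul_pow_div_add_one n ht]
  field_simp
  ring

theorem sum_range_choose_mul_sq_mul_pow_sub_one_div_add_one (n : ℕ) (ht : t ≠ 0)
    (ht' : t + 1 ≠ 0) :
    ∑ j ∈ range (n + 1), (n.choose j : K) * (j : K) ^ 2 * t ^ (j - 1) / ((j : K) + 1) =
      ((t + 1) ^ n * (t * ((n : K) ^ 2 * t - n + 1) + 1) - t - 1) /
        (((n : K) + 1) * t ^ 2 * (t + 1)) := by
  have split : ∀ j ∈ range (n + 1),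
      (n.choose j : K) * (j : K) ^ 2 * t ^ (j - 1) / ((j : K) + 1) =
        ((n.choose j : K) * j * t ^ j - (n.choose j : K) * t ^ j +
          (n.choose j : K) * t ^ j / ((j : K) + 1)) / t := fun j _ => by
    cases j with
    | zero => simp
    | succ k =>
      have hk : (k : K) + 1 + 1 ≠ 0 := by exact_mod_cast Nat.succ_ne_zero (k + 1)
      push_cast
      field_simp
      ring
  have hn : (n : K) + 1 ≠ 0 := Nat.cast_add_one_ne_zero n
  have hderiv := add_one_mul_sum_range_choose_mul_mul_pow n t
  rw [sum_congr rfl split, ← sum_div, sum_add_distrib, sum_sub_distrib, sum_range_choose_mul_pow,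
    sum_range_choose_mul_pow_div_add_one n ht]
  field_simp
  linear_combination (n + 1) * t * hderiv

end Field

theorem root_binomial_kernel_closed_forms_general (N : ℕ) (z : ℂ)
    (hz : z ≠ 0) (t : ℝ) (ht : t = ‖z‖ ^ 2) :
    (∑ j ∈ Finset.range (N + 1), (N.choose j : ℝ) * t ^ j / ((j : ℝ) + 1) =
      ((t + 1) ^ (N + 1) - 1) / (((N : ℝ) + 1) * t)) ∧
    (∑ j ∈ Finset.range (N + 1),
        (N.choose j : ℂ) * (j : ℂ) * (t : ℂ) ^ j / (((j : ℂ) + 1) * z) =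
      (((N : ℂ) * (t : ℂ) - 1) * ((t : ℂ) + 1) ^ N + 1) /
        (((N : ℂ) + 1) * z * (t : ℂ))) ∧
    (∑ j ∈ Finset.range (N + 1),
        (N.choose j : ℝ) * (j : ℝ) ^ 2 * t ^ (j - 1) / ((j : ℝ) + 1) =
      ((t + 1) ^ N * (t * ((N : ℝ) ^ 2 * t - (N : ℝ) + 1) + 1) - t - 1) /
        (((N : ℝ) + 1) * t ^ 2 * (t + 1))) := by
  have ht_pos : 0 < t := ht ▸ pow_pos (norm_pos_iff.mpr hz) 2
  have htC : (t : ℂ) ≠ 0 := Complex.ofReal_ne_zero.mpr ht_pos.ne'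
  refine ⟨sum_range_choose_mul_pow_div_add_one N ht_pos.ne', ?_,
    sum_range_choose_mul_sq_mul_pow_sub_one_div_add_one N ht_pos.ne' (by positivity)⟩
  simp_rw [div_mul_eq_div_div, ← sum_div]
  rw [sum_range_choose_mul_mul_pow_div_add_one N htC]
  simp only [div_div, mul_right_comm _ (t : ℂ) z]

/-- Closed forms for the kernels of the root-binomial functions
`f_j(z) = √(C(N,j)/(j+1))·z^j`, in terms of `t = |z|²`. -/
theorem root_binomial_kernel_closed_forms (N : ℕ) (hN : 0 < N) (z : ℂ)
    (hz : z ≠ 0) (t : ℝ) (ht : t = ‖z‖ ^ 2) :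
    (∑ j ∈ Finset.range (N + 1), (N.choose j : ℝ) * t ^ j / ((j : ℝ) + 1) =
      ((t + 1) ^ (N + 1) - 1) / (((N : ℝ) + 1) * t)) ∧
    (∑ j ∈ Finset.range (N + 1),
        (N.choose j : ℂ) * (j : ℂ) * (t : ℂ) ^ j / (((j : ℂ) + 1) * z) =
      (((N : ℂ) * (t : ℂ) - 1) * ((t : ℂ) + 1) ^ N + 1) /
        (((N : ℂ) + 1) * z * (t : ℂ))) ∧
    (∑ j ∈ Finset.range (N + 1),
        (N.choose j : ℝ) * (j : ℝ) ^ 2 * t ^ (j - 1) / ((j : ℝ) + 1) =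
      ((t + 1) ^ N * (t * ((N : ℝ) ^ 2 * t - (N : ℝ) + 1) + 1) - t - 1) /
        (((N : ℝ) + 1) * t ^ 2 * (t + 1))) :=
  root_binomial_kernel_closed_forms_general N z hz t ht
end

section
/- Let N ∈ ℕ, let p_0,…,p_{N+1} : ℂ → ℂ be polynomial functions with real coefficients, and let c ∈ ℝ be such that the Christoffel–Darboux formula holds: for all z, w ∈ ℂ with z ≠ w, Σ_{j=0}^N p_j(z)·p_j(w) = c·(p_{N+1}(z)·p_N(w) − p_N(z)·p_{N+1}(w))/(z − w). Then for every z ∈ ℂ with Im(z) ≠ 0, writing B_{1,N}(z) = Σ_{j=0}^N conj(p_j(z))·p_j′(z), one has Σ_{j=0}^N |p_j′(z)|² = c·Im(p_{N+1}′(z)·conj(p_N′(z)))/Im(z) − conj(B_{1,N}(z))/(2i·Im(z)) + B_{1,N}(z)/(2i·Im(z)). -/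
/-!
Clearing the denominator, `(x - w) ∑ p_j(x) p_j(w) = c (p_{N+1}(x) p_N(w) - p_N(x) p_{N+1}(w))`
holds for all `x, w`, trivially on the diagonal. Differentiating once in `w` and once in `x`
yields an identity involving `∑ p_j'(x) p_j'(w)`. At `x = z`, `w = conj z` the real coefficients
turn `p_j(conj z)` into `conj (p_j z)`, and since `z - conj z = 2i Im z` the identity can be
solved for `∑ |p_j'(z)|²`.
-/

open Finset ComplexConjugate

section ChristoffelDarboux

variable {𝕜 : Type*} [NontriviallyNormedField 𝕜] {N : ℕ} {f : ℕ → 𝕜 → 𝕜}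
  {c : 𝕜}

theorem sub_mul_sum_eq_of_christoffelDarboux
    (hCD : ∀ x w, x ≠ w → ∑ j ∈ range (N + 1), f j x * f j w =
      c * (f (N + 1) x * f N w - f N x * f (N + 1) w) / (x - w)) (x w : 𝕜) :
    (x - w) * ∑ j ∈ range (N + 1), f j x * f j w =
      c * (f (N + 1) x * f N w - f N x * f (N + 1) w) := by
  rcases eq_or_ne x w with rfl | hxw
  · ring
  · rw [hCD x w hxw, mul_div_cancel₀ _ (sub_ne_zero.mpr hxw)]

theorem christoffelDarboux_deriv_right (hf : ∀ j ≤ N + 1, Differentiable 𝕜 (f j))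
    (hCD : ∀ x w, (x - w) * ∑ j ∈ range (N + 1), f j x * f j w =
      c * (f (N + 1) x * f N w - f N x * f (N + 1) w)) (x w : 𝕜) :
    (x - w) * ∑ j ∈ range (N + 1), f j x * deriv (f j) w -
        ∑ j ∈ range (N + 1), f j x * f j w =
      c * (f (N + 1) x * deriv (f N) w - f N x * deriv (f (N + 1)) w) := by
  have hd : ∀ j ≤ N + 1, HasDerivAt (f j) (deriv (f j) w) w :=
    fun j hj => (hf j hj w).hasDerivAt
  have hL : HasDerivAt (fun w => (x - w) * ∑ j ∈ range (N + 1), f j x * f j w)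
      (-1 * ∑ j ∈ range (N + 1), f j x * f j w +
        (x - w) * ∑ j ∈ range (N + 1), f j x * deriv (f j) w) w :=
    ((hasDerivAt_id w).const_sub x).mul
      (HasDerivAt.fun_sum fun j hj => (hd j (mem_range.1 hj).le).const_mul (f j x))
  have hR := (((hd N N.le_succ).const_mul (f (N + 1) x)).sub
    ((hd (N + 1) le_rfl).const_mul (f N x))).const_mul c
  rw [funext (hCD x)] at hL
  linear_combination hL.unique hR

theorem christoffelDarboux_deriv_left_right (hf : ∀ j ≤ N + 1, Differentiable 𝕜 (f j))
    (hCD : ∀ x w, (x - w) * ∑ j ∈ range (N + 1), f j x * deriv (f j) w -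
      ∑ j ∈ range (N + 1), f j x * f j w =
        c * (f (N + 1) x * deriv (f N) w - f N x * deriv (f (N + 1)) w)) (x w : 𝕜) :
    (x - w) * ∑ j ∈ range (N + 1), deriv (f j) x * deriv (f j) w +
        ∑ j ∈ range (N + 1), f j x * deriv (f j) w -
        ∑ j ∈ range (N + 1), f j w * deriv (f j) x =
      c * (deriv (f (N + 1)) x * deriv (f N) w - deriv (f N) x * deriv (f (N + 1)) w) := by
  have hd : ∀ j ≤ N + 1, HasDerivAt (f j) (deriv (f j) x) x :=
    fun j hj => (hf j hj x).hasDerivAt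
  have hL : HasDerivAt (fun x => (x - w) * ∑ j ∈ range (N + 1), f j x * deriv (f j) w -
        ∑ j ∈ range (N + 1), f j x * f j w)
      (1 * ∑ j ∈ range (N + 1), f j x * deriv (f j) w +
        (x - w) * ∑ j ∈ range (N + 1), deriv (f j) x * deriv (f j) w -
        ∑ j ∈ range (N + 1), deriv (f j) x * f j w) x :=
    (((hasDerivAt_id x).sub_const w).mul
      (HasDerivAt.fun_sum fun j hj => (hd j (mem_range.1 hj).le).mul_const _)).sub
      (HasDerivAt.fun_sum fun j hj => (hd j (mem_range.1 hj).le).mul_const _)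
  have hR := (((hd (N + 1) le_rfl).mul_const (deriv (f N) w)).sub
    ((hd N N.le_succ).mul_const (deriv (f (N + 1)) w))).const_mul c
  rw [funext (hCD · w)] at hL
  have hcomm : ∑ j ∈ range (N + 1), deriv (f j) x * f j w =
      ∑ j ∈ range (N + 1), f j w * deriv (f j) x :=
    sum_congr rfl fun j _ => mul_comm _ _
  linear_combination hL.unique hR + hcomm

end ChristoffelDarboux

theorem differentiable_of_eq_aeval {g : ℂ → ℂ} {q : Polynomial ℝ}
    (hg : ∀ z, g z = q.aeval z) :
    Differentiable ℂ g := by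
  rw [funext hg]; exact q.differentiable_aeval

theorem apply_conj_of_eq_aeval {g : ℂ → ℂ} {q : Polynomial ℝ}
    (hg : ∀ z, g z = q.aeval z) (z : ℂ) :
    g (conj z) = conj (g z) := by
  rw [hg, hg, Polynomial.aeval_conj]

theorem deriv_conj_of_eq_aeval {g : ℂ → ℂ} {q : Polynomial ℝ}
    (hg : ∀ z, g z = q.aeval z) (z : ℂ) :
    deriv g (conj z) = conj (deriv g z) := by
  simp only [funext hg, Polynomial.deriv_aeval, Polynomial.aeval_conj]

theorem ofReal_eq_of_two_I_mul_add_conj_sub_eq (S c y : ℝ) (a B : ℂ) (hy : y ≠ 0)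
    (h : (2 * Complex.I * y) * S + conj B - B = c * (a - conj a)) :
    (S : ℂ) =
      ((c * a.im / y : ℝ) : ℂ) - conj B / (2 * Complex.I * y) + B / (2 * Complex.I * y) := by
  rw [Complex.sub_conj] at h
  have hy' : (y : ℂ) ≠ 0 := by exact_mod_cast hy
  push_cast at h ⊢
  field_simp
  linear_combination h

/-- For orthonormal polynomials on the real line satisfying the
Christoffel–Darboux formula,
`B₂,N(z) = c·Im(p_{N+1}′(z)·conj(p_N′(z)))/Im(z) − conj(B₁,N(z))/(2i·Im z) + B₁,N(z)/(2i·Im z)`. -/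
theorem CD_real_line_B2 (N : ℕ) (p : ℕ → ℂ → ℂ) (c : ℝ)
    (hreal : ∀ j ≤ N + 1, ∃ q : Polynomial ℝ, ∀ z : ℂ, p j z = Polynomial.aeval z q)
    (hCD : ∀ z w : ℂ, z ≠ w →
      ∑ j ∈ Finset.range (N + 1), p j z * p j w =
        (c : ℂ) * (p (N + 1) z * p N w - p N z * p (N + 1) w) / (z - w))
    (z : ℂ) (hz : z.im ≠ 0) :
    ((∑ j ∈ Finset.range (N + 1), ‖deriv (p j) z‖ ^ 2 : ℝ) : ℂ) =
      ((c * (deriv (p (N + 1)) z * (starRingEnd ℂ) (deriv (p N) z)).im / z.im : ℝ) : ℂ) -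
        (starRingEnd ℂ)
            (∑ j ∈ Finset.range (N + 1), (starRingEnd ℂ) (p j z) * deriv (p j) z) /
          (2 * Complex.I * (z.im : ℂ)) +
        (∑ j ∈ Finset.range (N + 1), (starRingEnd ℂ) (p j z) * deriv (p j) z) /
          (2 * Complex.I * (z.im : ℂ)) := by
  choose! q hq using hreal
  have hdiff j (hj : j ≤ N + 1) := differentiable_of_eq_aeval (hq j hj)
  have key := christoffelDarboux_deriv_left_right hdiff
    (christoffelDarboux_deriv_right hdiff (sub_mul_sum_eq_of_christoffelDarboux hCD)) z (conj z)
  have hp : ∀ j ∈ range (N + 1), p j (conj z) = conj (p j z) :=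
    fun j hj => apply_conj_of_eq_aeval (hq j (mem_range.1 hj).le) z
  have hd : ∀ j ≤ N + 1, deriv (p j) (conj z) = conj (deriv (p j) z) :=
    fun j hj => deriv_conj_of_eq_aeval (hq j hj) z
  rw [sum_congr rfl fun j hj => congrArg (deriv (p j) z * ·) (hd j (mem_range.1 hj).le),
    sum_congr rfl fun j hj => congrArg (p j z * ·) (hd j (mem_range.1 hj).le),
    sum_congr rfl fun j hj => congrArg (· * deriv (p j) z) (hp j hj),
    hd N N.le_succ, hd (N + 1) le_rfl, Complex.sub_conj] at key
  refine ofReal_eq_of_two_I_mul_add_conj_sub_eq _ _ _ _ _ hz ?_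
  push_cast at key ⊢
  simp only [map_sum, map_mul, Complex.conj_conj, ← Complex.mul_conj']
  linear_combination key
end

section
/- Let N be a positive integer, let p_0,…,p_{N+1} : ℂ → ℂ be polynomial functions with real coefficients, and let c ∈ ℝ, c ≠ 0, be such that the Christoffel–Darboux formula holds: for all z, w ∈ ℂ with z ≠ w, Σ_{j=0}^N p_j(z)·p_j(w) = c·(p_{N+1}(z)·p_N(w) − p_N(z)·p_{N+1}(w))/(z − w). Let z ∈ ℂ with Im(z) ≠ 0 and Σ_{j=0}^N |p_j(z)|² > 0, and write I = Im(p_{N+1}(z)·conj(p_N(z))), J = Im(p_{N+1}′(z)·conj(p_N′(z))), D = conj(p_N(z))·p_{N+1}′(z) − conj(p_{N+1}(z))·p_N′(z). Then for K = (K₁,K₂) ∈ ℝ², the density function built from f_j = p_j satisfies h_{N,K}(z) = (1/π)·exp(−(K₁²+K₂²)·Im(z)/(2c·I)) · [ J/I − |D|²/(4I²) + 1/(4·Im(z)²) + ((K₁²+K₂²)/c)·( |D|²·Im(z)/(8I³) − Re(D)/(4I²) + 1/(8·Im(z)·I) ) ]. -/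
/-! Clearing the denominator, the Christoffel–Darboux identity
`(∑ p_j(ζ) p_j(ω)) (ζ - ω) = c (p_{N+1}(ζ) p_N(ω) - p_N(ζ) p_{N+1}(ω))` holds for all `ζ, ω`.
Differentiating it in `ζ`, then in `ω`, and evaluating at `ω = conj z`, where real coefficients
give `p_j(conj z) = conj (p_j z)` and `p_j'(conj z) = conj (p_j' z)`, expresses the three kernels
through `p_N`, `p_{N+1}` and their derivatives at `z`:
`B₀ Im z = c I`, `B₁ (z - conj z) + B₀ = c D` and `B₂ Im z - Im B₁ = c J`.
Substituting these into `h_{N,K}` leaves an algebraic identity. -/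

open Finset

open ComplexConjugate

lemma deriv_conj_eq_conj_deriv {f : ℂ → ℂ} (hf : ∀ z, f (conj z) = conj (f z)) (z : ℂ) :
    deriv f (conj z) = conj (deriv f z) := by
  have hsymm : conj ∘ f ∘ conj = f := funext fun w => by simp [hf]
  simpa [hsymm] using congrFun (deriv_conj_conj (f := f)) (conj z)

section ChristoffelDarboux

variable {f : ℕ → ℂ → ℂ} {N : ℕ} {c : ℂ}

def ChristoffelDarboux (f : ℕ → ℂ → ℂ) (N : ℕ) (c : ℂ) : Prop :=
  ∀ ζ ω : ℂ, (∑ j ∈ range (N + 1), f j ζ * f j ω) * (ζ - ω) =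
    c * (f (N + 1) ζ * f N ω - f N ζ * f (N + 1) ω)

lemma christoffelDarboux_of_div
    (hCD : ∀ ζ ω : ℂ, ζ ≠ ω → ∑ j ∈ range (N + 1), f j ζ * f j ω =
      c * (f (N + 1) ζ * f N ω - f N ζ * f (N + 1) ω) / (ζ - ω)) :
    ChristoffelDarboux f N c := by
  intro ζ ω
  rcases eq_or_ne ζ ω with rfl | hne
  · ring
  · rw [hCD ζ ω hne, div_mul_cancel₀ _ (sub_ne_zero.2 hne)]

lemma christoffelDarboux_deriv_left (hdiff : ∀ j ≤ N + 1, Differentiable ℂ (f j))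
    (hCD : ChristoffelDarboux f N c) (ζ ω : ℂ) :
    ∑ j ∈ range (N + 1), (deriv (f j) ζ * f j ω * (ζ - ω) + f j ζ * f j ω) =
      c * (deriv (f (N + 1)) ζ * f N ω - deriv (f N) ζ * f (N + 1) ω) := by
  have hder : ∀ j ≤ N + 1, HasDerivAt (f j) (deriv (f j) ζ) ζ :=
    fun j hj => (hdiff j hj ζ).hasDerivAt
  have hlhs : HasDerivAt (fun ζ => ∑ j ∈ range (N + 1), f j ζ * f j ω * (ζ - ω))
      (∑ j ∈ range (N + 1), (deriv (f j) ζ * f j ω * (ζ - ω) + f j ζ * f j ω)) ζ := by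
    refine HasDerivAt.fun_sum fun j hj => ?_
    simpa using ((hder j (by grind)).mul_const (f j ω)).fun_mul ((hasDerivAt_id' ζ).sub_const ω)
  have hrhs := (((hder (N + 1) le_rfl).mul_const (f N ω)).fun_sub
    ((hder N (by omega)).mul_const (f (N + 1) ω))).const_mul c
  have hfun : (fun ζ => ∑ j ∈ range (N + 1), f j ζ * f j ω * (ζ - ω)) =
      fun ζ => c * (f (N + 1) ζ * f N ω - f N ζ * f (N + 1) ω) :=
    funext fun ζ => by rw [← sum_mul, hCD]
  exact hlhs.unique (hfun ▸ hrhs)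

lemma christoffelDarboux_deriv_deriv (hdiff : ∀ j ≤ N + 1, Differentiable ℂ (f j))
    (hCD : ChristoffelDarboux f N c) (ζ ω : ℂ) :
    ∑ j ∈ range (N + 1), (deriv (f j) ζ * deriv (f j) ω * (ζ - ω) - deriv (f j) ζ * f j ω +
        f j ζ * deriv (f j) ω) =
      c * (deriv (f (N + 1)) ζ * deriv (f N) ω - deriv (f N) ζ * deriv (f (N + 1)) ω) := by
  have hder : ∀ j ≤ N + 1, HasDerivAt (f j) (deriv (f j) ω) ω :=
    fun j hj => (hdiff j hj ω).hasDerivAt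
  have hlhs : HasDerivAt
      (fun ω => ∑ j ∈ range (N + 1), (deriv (f j) ζ * f j ω * (ζ - ω) + f j ζ * f j ω))
      (∑ j ∈ range (N + 1), (deriv (f j) ζ * deriv (f j) ω * (ζ - ω) - deriv (f j) ζ * f j ω +
        f j ζ * deriv (f j) ω)) ω := by
    refine HasDerivAt.fun_sum fun j hj => ?_
    convert (((hder j (by grind)).const_mul (deriv (f j) ζ)).fun_mul
      ((hasDerivAt_id' ω).const_sub ζ)).fun_add ((hder j (by grind)).const_mul (f j ζ)) using 1
    ring
  have hrhs := (((hder N (by omega)).const_mul (deriv (f (N + 1)) ζ)).fun_sub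
    ((hder (N + 1) le_rfl).const_mul (deriv (f N) ζ))).const_mul c
  exact hlhs.unique (funext (christoffelDarboux_deriv_left hdiff hCD ζ) ▸ hrhs)

end ChristoffelDarboux

section Kernels

variable {f : ℕ → ℂ → ℂ} {N : ℕ} {c : ℝ}

lemma sum_mul_conj_eq_B0 (z : ℂ) : ∑ j ∈ range (N + 1), f j z * conj (f j z) = B0 f N z := by
  simp [B0, RCLike.mul_conj]

lemma sum_deriv_mul_conj_eq_B2 (z : ℂ) :
    ∑ j ∈ range (N + 1), deriv (f j) z * conj (deriv (f j) z) = B2 f N z := by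
  simp [B2, RCLike.mul_conj]

lemma sum_deriv_mul_conj_eq_B1 (z : ℂ) :
    ∑ j ∈ range (N + 1), deriv (f j) z * conj (f j z) = B1 f N z := by
  simp [B1, mul_comm]

lemma sum_mul_conj_deriv_eq_conj_B1 (z : ℂ) :
    ∑ j ∈ range (N + 1), f j z * conj (deriv (f j) z) = conj (B1 f N z) := by
  simp [B1, mul_comm]

lemma mul_conj_sub_mul_conj (a b : ℂ) :
    a * conj b - b * conj a = ((2 * (a * conj b).im : ℝ) : ℂ) * Complex.I := by
  rw [← Complex.sub_conj]
  simp [mul_comm]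

lemma B0_mul_im (hCD : ChristoffelDarboux f N c)
    (hconj : ∀ j ≤ N + 1, ∀ z, f j (conj z) = conj (f j z)) (z : ℂ) :
    B0 f N z * z.im = c * (f (N + 1) z * conj (f N z)).im := by
  have h := hCD z (conj z)
  rw [sum_congr rfl fun j hj => by rw [hconj j (by grind)], sum_mul_conj_eq_B0,
    hconj _ le_rfl, hconj N (by omega), Complex.sub_conj, mul_conj_sub_mul_conj] at h
  have him := congrArg Complex.im h
  simp only [Complex.im_ofReal_mul, Complex.mul_I_im, Complex.ofReal_re] at him
  linarith

lemma B1_mul_sub_conj_add_B0 (hdiff : ∀ j ≤ N + 1, Differentiable ℂ (f j))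
    (hCD : ChristoffelDarboux f N c)
    (hconj : ∀ j ≤ N + 1, ∀ z, f j (conj z) = conj (f j z)) (z : ℂ) :
    B1 f N z * (z - conj z) + B0 f N z =
      c * (conj (f N z) * deriv (f (N + 1)) z - conj (f (N + 1) z) * deriv (f N) z) := by
  have h := christoffelDarboux_deriv_left hdiff hCD z (conj z)
  rw [sum_congr rfl fun j hj => by rw [hconj j (by grind)], hconj _ le_rfl,
    hconj N (by omega), sum_add_distrib, sum_mul_conj_eq_B0] at h
  rw [← sum_deriv_mul_conj_eq_B1, sum_mul]
  linear_combination h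

lemma B2_mul_im_sub_B1_im (hdiff : ∀ j ≤ N + 1, Differentiable ℂ (f j))
    (hCD : ChristoffelDarboux f N c)
    (hconj : ∀ j ≤ N + 1, ∀ z, f j (conj z) = conj (f j z)) (z : ℂ) :
    B2 f N z * z.im - (B1 f N z).im = c * (deriv (f (N + 1)) z * conj (deriv (f N) z)).im := by
  have hconj' : ∀ j ≤ N + 1, deriv (f j) (conj z) = conj (deriv (f j) z) :=
    fun j hj => deriv_conj_eq_conj_deriv (hconj j hj) z
  have h := christoffelDarboux_deriv_deriv hdiff hCD z (conj z)
  rw [sum_congr rfl fun j hj => by rw [hconj j (by grind), hconj' j (by grind)],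
    hconj' _ le_rfl, hconj' N (by omega), sum_add_distrib, sum_sub_distrib, ← sum_mul,
    sum_deriv_mul_conj_eq_B2, sum_deriv_mul_conj_eq_B1, sum_mul_conj_deriv_eq_conj_B1,
    sub_add, Complex.sub_conj, Complex.sub_conj, mul_conj_sub_mul_conj] at h
  have him := congrArg Complex.im h
  simp only [Complex.sub_im, Complex.im_ofReal_mul, Complex.mul_I_im, Complex.ofReal_re] at him
  linarith

end Kernels

lemma density_eq_of_kernel_relations {b₀ b₂ y c I J K : ℝ} {β D : ℂ}
    (hb₀ : b₀ ≠ 0) (hy : y ≠ 0) (h₀ : b₀ * y = c * I)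
    (h₁ : β * ((2 * y : ℝ) * Complex.I) + b₀ = c * D) (h₂ : b₂ * y - β.im = c * J) :
    Real.exp (-K / (2 * b₀)) / (Real.pi * b₀) * (b₂ - ‖β‖ ^ 2 / b₀ * (1 - K / (2 * b₀))) =
      1 / Real.pi * Real.exp (-K * y / (2 * c * I)) *
        (J / I - ‖D‖ ^ 2 / (4 * I ^ 2) + 1 / (4 * y ^ 2) +
          K / c * (‖D‖ ^ 2 * y / (8 * I ^ 3) - D.re / (4 * I ^ 2) + 1 / (8 * y * I))) := by
  have hcI : c * I ≠ 0 := h₀ ▸ mul_ne_zero hb₀ hy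
  have hc : c ≠ 0 := left_ne_zero_of_mul hcI
  have hI : I ≠ 0 := right_ne_zero_of_mul hcI
  have hre := congrArg Complex.re h₁
  have him := congrArg Complex.im h₁
  simp only [Complex.add_re, Complex.add_im, Complex.mul_re, Complex.mul_im, Complex.ofReal_re,
    Complex.ofReal_im, Complex.I_re, Complex.I_im] at hre him
  have hb₀_eq : b₀ = c * I / y := by field_simp; linarith
  have hβre : β.re = c * D.im / (2 * y) := by field_simp; linarith
  have hβim : β.im = (b₀ - c * D.re) / (2 * y) := by field_simp; linarith
  have hb₂ : b₂ = (c * J + β.im) / y := by field_simp; linarith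
  have hexp : -K * y / (2 * c * I) = -K / (2 * b₀) := by rw [hb₀_eq]; field_simp
  rw [hexp, Complex.sq_norm, Complex.sq_norm, Complex.normSq_apply, Complex.normSq_apply, hb₂,
    hβim, hβre, hb₀_eq]
  field_simp
  ring

theorem density_orthogonal_real_line_general (N : ℕ)
    (p : ℕ → ℂ → ℂ) (c : ℝ)
    (hreal : ∀ j ≤ N + 1, ∃ q : Polynomial ℝ, ∀ z : ℂ, p j z = Polynomial.aeval z q)
    (hCD : ∀ z w : ℂ, z ≠ w →
      ∑ j ∈ Finset.range (N + 1), p j z * p j w =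
        (c : ℂ) * (p (N + 1) z * p N w - p N z * p (N + 1) w) / (z - w))
    (z : ℂ) (hz : z.im ≠ 0)
    (hB0 : 0 < B0 p N z)
    (I J : ℝ) (D : ℂ)
    (hI : I = (p (N + 1) z * (starRingEnd ℂ) (p N z)).im)
    (hJ : J = (deriv (p (N + 1)) z * (starRingEnd ℂ) (deriv (p N) z)).im)
    (hD : D = (starRingEnd ℂ) (p N z) * deriv (p (N + 1)) z -
      (starRingEnd ℂ) (p (N + 1) z) * deriv (p N) z)
    (K₁ K₂ : ℝ) :
    hDen p N K₁ K₂ z =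
      1 / Real.pi * Real.exp (-(K₁ ^ 2 + K₂ ^ 2) * z.im / (2 * c * I)) *
        (J / I - ‖D‖ ^ 2 / (4 * I ^ 2) + 1 / (4 * z.im ^ 2) +
          (K₁ ^ 2 + K₂ ^ 2) / c *
            (‖D‖ ^ 2 * z.im / (8 * I ^ 3) - D.re / (4 * I ^ 2) +
              1 / (8 * z.im * I))) := by
  have hdiff : ∀ j ≤ N + 1, Differentiable ℂ (p j) := fun j hj => by
    obtain ⟨q, hq⟩ := hreal j hj
    rw [funext hq]
    exact q.differentiable_aeval
  have hconj : ∀ j ≤ N + 1, ∀ w, p j (conj w) = conj (p j w) := fun j hj w => by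
    obtain ⟨q, hq⟩ := hreal j hj
    rw [hq, hq, Polynomial.aeval_conj]
  have hCD' := christoffelDarboux_of_div hCD
  have h₁ := B1_mul_sub_conj_add_B0 hdiff hCD' hconj z
  rw [Complex.sub_conj] at h₁
  subst hI hJ hD
  exact density_eq_of_kernel_relations hB0.ne' hz (B0_mul_im hCD' hconj z) h₁
    (B2_mul_im_sub_B1_im hdiff hCD' hconj z)

/-- Theorem: density of complex zeros of random sums of polynomials
orthonormal on the real line, at an arbitrary level `K = (K₁, K₂)`. -/
theorem density_orthogonal_real_line (N : ℕ) (hN : 0 < N)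
    (p : ℕ → ℂ → ℂ) (c : ℝ) (hc : c ≠ 0)
    (hreal : ∀ j ≤ N + 1, ∃ q : Polynomial ℝ, ∀ z : ℂ, p j z = Polynomial.aeval z q)
    (hCD : ∀ z w : ℂ, z ≠ w →
      ∑ j ∈ Finset.range (N + 1), p j z * p j w =
        (c : ℂ) * (p (N + 1) z * p N w - p N z * p (N + 1) w) / (z - w))
    (z : ℂ) (hz : z.im ≠ 0)
    (hB0 : 0 < B0 p N z)
    (I J : ℝ) (D : ℂ)
    (hI : I = (p (N + 1) z * (starRingEnd ℂ) (p N z)).im)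
    (hJ : J = (deriv (p (N + 1)) z * (starRingEnd ℂ) (deriv (p N) z)).im)
    (hD : D = (starRingEnd ℂ) (p N z) * deriv (p (N + 1)) z -
      (starRingEnd ℂ) (p (N + 1) z) * deriv (p N) z)
    (K₁ K₂ : ℝ) :
    hDen p N K₁ K₂ z =
      1 / Real.pi * Real.exp (-(K₁ ^ 2 + K₂ ^ 2) * z.im / (2 * c * I)) *
        (J / I - ‖D‖ ^ 2 / (4 * I ^ 2) + 1 / (4 * z.im ^ 2) +
          (K₁ ^ 2 + K₂ ^ 2) / c *
            (‖D‖ ^ 2 * z.im / (8 * I ^ 3) - D.re / (4 * I ^ 2) +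
              1 / (8 * z.im * I))) :=
  density_orthogonal_real_line_general N p c hreal hCD z hz hB0 I J D hI hJ hD K₁ K₂
end

section
/- Let N ∈ ℕ and let φ_0,…,φ_{N+1} : ℂ → ℂ be polynomial functions, with φ*_{N+1} the reciprocal polynomial of φ_{N+1} of degree bound N+1 (the coefficient of z^j in φ*_{N+1} is the complex conjugate of the coefficient of z^{N+1−j} in φ_{N+1}), such that the Christoffel–Darboux formula on the unit circle holds: for all z, w ∈ ℂ with conj(w)·z ≠ 1, Σ_{j=0}^N φ_j(z)·conj(φ_j(w)) = (conj(φ*_{N+1}(w))·φ*_{N+1}(z) − conj(φ_{N+1}(w))·φ_{N+1}(z))/(1 − conj(w)·z). Then for every z ∈ ℂ with |z| ≠ 1, writing B_{0,N}(z) = Σ_{j=0}^N |φ_j(z)|² and B_{1,N}(z) = Σ_{j=0}^N conj(φ_j(z))·φ_j′(z), one has Σ_{j=0}^N |φ_j′(z)|² = (|φ*_{N+1}′(z)|² − |φ_{N+1}′(z)|²)/(1 − |z|²) + 2·Re(z·B_{1,N}(z))/(1 − |z|²) + B_{0,N}(z)/(1 − |z|²). -/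
/-!
Put `f♯ := conj ∘ f ∘ conj`, an entire function whenever `f` is. Substituting `w = conj v`, the
Christoffel–Darboux formula becomes the identity
`(1 - v u) ∑ⱼ φⱼ(u) φⱼ♯(v) = φ*♯(v) φ*(u) - φ_{N+1}♯(v) φ_{N+1}(u)`, valid off `v u = 1` and hence
everywhere by continuity. Applying `∂ᵤ ∂ᵥ` and evaluating at `u = z`, `v = conj z`, where
`f♯(conj z) = conj (f z)` and `f♯'(conj z) = conj (f' z)`, gives the formula after dividing by
`1 - |z|²`.
-/

open Finset ComplexConjugate

section

variable {𝕜 : Type*} [NontriviallyNormedField 𝕜]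

theorem mixed_partial_eq_of_eq {E : Type*} [NormedAddCommGroup E] [NormedSpace 𝕜 E]
    {F G Fu Gu Fuv Guv : 𝕜 → 𝕜 → E}
    (hF : ∀ u v, HasDerivAt (F · v) (Fu u v) u) (hG : ∀ u v, HasDerivAt (G · v) (Gu u v) u)
    (hFu : ∀ u v, HasDerivAt (Fu u ·) (Fuv u v) v) (hGu : ∀ u v, HasDerivAt (Gu u ·) (Guv u v) v)
    (hFG : F = G) (u v : 𝕜) : Fuv u v = Guv u v := by
  have hu : Fu = Gu := funext₂ fun u v => (hF u v).unique (hFG ▸ hG u v)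
  exact (hFu u v).unique (hu ▸ hGu u v)

theorem eq_of_forall_mul_ne_one {X : Type*} [TopologicalSpace X] [T2Space X] {A B : 𝕜 → X}
    (hA : Continuous A) (hB : Continuous B) (u : 𝕜) (h : ∀ v, v * u ≠ 1 → A v = B v) :
    A = B :=
  hA.ext_on (dense_compl_singleton u⁻¹) hB fun v hv =>
    h v fun hvu => hv (eq_inv_of_mul_eq_one_left hvu)

theorem mixed_partial_of_kernel_identity {ι : Type*} (s : Finset ι) {f g : ι → 𝕜 → 𝕜}
    {p q r t : 𝕜 → 𝕜} (hf : ∀ j ∈ s, Differentiable 𝕜 (f j))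
    (hg : ∀ j ∈ s, Differentiable 𝕜 (g j)) (hp : Differentiable 𝕜 p)
    (hq : Differentiable 𝕜 q) (hr : Differentiable 𝕜 r) (ht : Differentiable 𝕜 t)
    (h : ∀ u v, (1 - v * u) * ∑ j ∈ s, f j u * g j v = p v * q u - r v * t u) (u v : 𝕜) :
    (1 - v * u) * ∑ j ∈ s, deriv (f j) u * deriv (g j) v
        - u * ∑ j ∈ s, deriv (f j) u * g j v - v * ∑ j ∈ s, f j u * deriv (g j) v
        - ∑ j ∈ s, f j u * g j v =
      deriv p v * deriv q u - deriv r v * deriv t u := by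
  refine mixed_partial_eq_of_eq (F := fun u v => (1 - v * u) * ∑ j ∈ s, f j u * g j v)
    (Fu := fun u v => (1 - v * u) * ∑ j ∈ s, deriv (f j) u * g j v
      - v * ∑ j ∈ s, f j u * g j v)
    (Gu := fun u v => p v * deriv q u - r v * deriv t u)
    (Fuv := fun u v => (1 - v * u) * ∑ j ∈ s, deriv (f j) u * deriv (g j) v
      - u * ∑ j ∈ s, deriv (f j) u * g j v - v * ∑ j ∈ s, f j u * deriv (g j) v
      - ∑ j ∈ s, f j u * g j v)
    (Guv := fun u v => deriv p v * deriv q u - deriv r v * deriv t u) ?_ ?_ ?_ ?_ (funext₂ h) u v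
  · intro u v
    have hK := HasDerivAt.fun_sum fun j hj => ((hf j hj u).hasDerivAt).mul_const (g j v)
    exact ((((hasDerivAt_id' u).const_mul v).const_sub 1).mul hK).congr_deriv (by ring)
  · intro u v
    exact ((hq u).hasDerivAt.const_mul (p v)).sub ((ht u).hasDerivAt.const_mul (r v))
  · intro u v
    have hK := HasDerivAt.fun_sum fun j hj => ((hg j hj v).hasDerivAt).const_mul (f j u)
    have hK' := HasDerivAt.fun_sum fun j hj => ((hg j hj v).hasDerivAt).const_mul (deriv (f j) u)
    exact (((((hasDerivAt_id' v).mul_const u).const_sub 1).mul hK').sub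
      ((hasDerivAt_id' v).mul hK)).congr_deriv (by ring)
  · intro u v
    exact ((hp v).hasDerivAt.mul_const _).sub ((hr v).hasDerivAt.mul_const _)

end

theorem Differentiable.conj_conj {f : ℂ → ℂ} (hf : Differentiable ℂ f) :
    Differentiable ℂ (conj ∘ f ∘ conj) :=
  fun _ => differentiableAt_conj_conj_iff.mpr (hf _)

theorem christoffelDarboux_kernel_identity {ι : Type*} (s : Finset ι) {φ : ι → ℂ → ℂ}
    {ψ χ : ℂ → ℂ} (hφ : ∀ j ∈ s, Continuous (φ j)) (hψ : Continuous ψ) (hχ : Continuous χ)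
    (hCD : ∀ z w : ℂ, conj w * z ≠ 1 →
      ∑ j ∈ s, φ j z * conj (φ j w) =
        (conj (ψ w) * ψ z - conj (χ w) * χ z) / (1 - conj w * z))
    (u v : ℂ) :
    (1 - v * u) * ∑ j ∈ s, φ j u * (conj ∘ φ j ∘ conj) v =
      (conj ∘ ψ ∘ conj) v * ψ u - (conj ∘ χ ∘ conj) v * χ u := by
  refine congrFun (eq_of_forall_mul_ne_one
    (A := fun v => (1 - v * u) * ∑ j ∈ s, φ j u * (conj ∘ φ j ∘ conj) v)
    (B := fun v => (conj ∘ ψ ∘ conj) v * ψ u - (conj ∘ χ ∘ conj) v * χ u) ?_ ?_ u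
    fun v hvu => ?_) v
  · fun_prop
  · fun_prop
  · have hne : 1 - v * u ≠ 0 := sub_ne_zero.mpr hvu.symm
    simp only [Function.comp_apply]
    rw [hCD u (conj v) (by rwa [Complex.conj_conj]), Complex.conj_conj, mul_div_cancel₀ _ hne]

theorem sum_norm_sq_eq_of_mixed_partial_diag {ι : Type*} (s : Finset ι) (a b : ι → ℂ)
    (S T w : ℂ) (hw : ‖w‖ ≠ 1)
    (h : (1 - conj w * w) * ∑ j ∈ s, a j * conj (a j)
        - w * ∑ j ∈ s, a j * conj (b j) - conj w * ∑ j ∈ s, b j * conj (a j)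
        - ∑ j ∈ s, b j * conj (b j) = conj S * S - conj T * T) :
    ∑ j ∈ s, ‖a j‖ ^ 2 =
      (‖S‖ ^ 2 - ‖T‖ ^ 2) / (1 - ‖w‖ ^ 2) +
      2 * (w * ∑ j ∈ s, conj (b j) * a j).re / (1 - ‖w‖ ^ 2) +
      (∑ j ∈ s, ‖b j‖ ^ 2) / (1 - ‖w‖ ^ 2) := by
  set C := w * ∑ j ∈ s, conj (b j) * a j
  have hcross : w * ∑ j ∈ s, a j * conj (b j) + conj w * ∑ j ∈ s, b j * conj (a j) =
      2 * C.re := by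
    rw [← Complex.ofReal_ofNat, ← Complex.ofReal_mul, ← Complex.add_conj]
    simp only [C, map_mul, map_sum, Complex.conj_conj, mul_comm]
  simp only [Complex.mul_conj', Complex.conj_mul'] at h
  have hreal : (1 - ‖w‖ ^ 2) * ∑ j ∈ s, ‖a j‖ ^ 2 - 2 * C.re - ∑ j ∈ s, ‖b j‖ ^ 2 =
      ‖S‖ ^ 2 - ‖T‖ ^ 2 := by
    apply Complex.ofReal_injective
    push_cast
    linear_combination h + hcross
  have hw' : 1 - ‖w‖ ^ 2 ≠ 0 := by
    intro h0
    exact hw ((pow_eq_one_iff_of_nonneg (norm_nonneg w) two_ne_zero).mp (by linarith))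
  field_simp
  linarith

theorem CD_unit_circle_B2_general
    (N : ℕ) (φ : ℕ → ℂ → ℂ) (φs : ℂ → ℂ) (Q : Polynomial ℂ)
    (hpoly : ∀ j ≤ N + 1, ∃ q : Polynomial ℂ, ∀ z : ℂ, φ j z = Polynomial.eval z q)
    (hφs : ∀ z : ℂ, φs z =
      Polynomial.eval z (Polynomial.reflect (N + 1) (Q.map (starRingEnd ℂ))))
    (hCD : ∀ z w : ℂ, (starRingEnd ℂ) w * z ≠ 1 →
      ∑ j ∈ Finset.range (N + 1), φ j z * (starRingEnd ℂ) (φ j w) =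
        ((starRingEnd ℂ) (φs w) * φs z -
          (starRingEnd ℂ) (φ (N + 1) w) * φ (N + 1) z) /
          (1 - (starRingEnd ℂ) w * z))
    (z : ℂ) (hz : ‖z‖ ≠ 1)
    :
    ∑ j ∈ Finset.range (N + 1), ‖deriv (φ j) z‖ ^ 2 =
      (‖deriv φs z‖ ^ 2 - ‖deriv (φ (N + 1)) z‖ ^ 2) /
        (1 - ‖z‖ ^ 2) +
      2 * (z * ∑ j ∈ Finset.range (N + 1),
            (starRingEnd ℂ) (φ j z) * deriv (φ j) z).re /
        (1 - ‖z‖ ^ 2) +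
      (∑ j ∈ Finset.range (N + 1), ‖φ j z‖ ^ 2) /
        (1 - ‖z‖ ^ 2) := by
  have hφ : ∀ j ≤ N + 1, Differentiable ℂ (φ j) := fun j hj => by
    obtain ⟨q, hq⟩ := hpoly j hj
    rw [funext hq]
    exact q.differentiable
  have hφs' : Differentiable ℂ φs := by
    rw [funext hφs]
    exact Polynomial.differentiable _
  have hφN := hφ (N + 1) le_rfl
  have hsum : ∀ j ∈ range (N + 1), Differentiable ℂ (φ j) := fun j hj =>
    hφ j (mem_range.mp hj).le
  have hkernel := christoffelDarboux_kernel_identity (range (N + 1))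
    (fun j hj => (hsum j hj).continuous) hφs'.continuous hφN.continuous hCD
  have hdiag := mixed_partial_of_kernel_identity (range (N + 1)) hsum
    (fun j hj => (hsum j hj).conj_conj) hφs'.conj_conj hφs' hφN.conj_conj hφN hkernel z (conj z)
  simp only [deriv_conj_conj, Function.comp_apply, Complex.conj_conj] at hdiag
  exact sum_norm_sq_eq_of_mixed_partial_diag _ _ _ _ _ _ hz hdiag

/-- Christoffel–Darboux on the unit circle:
`B₂,N(z) = (|φ*′|² − |φ′|²)/(1−|z|²) + 2Re(z·B₁,N(z))/(1−|z|²) + B₀,N(z)/(1−|z|²)`. -/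
theorem CD_unit_circle_B2
    (N : ℕ) (φ : ℕ → ℂ → ℂ) (φs : ℂ → ℂ) (Q : Polynomial ℂ)
    (hpoly : ∀ j ≤ N + 1, ∃ q : Polynomial ℂ, ∀ z : ℂ, φ j z = Polynomial.eval z q)
    (hQ : ∀ z : ℂ, φ (N + 1) z = Polynomial.eval z Q)
    (hφs : ∀ z : ℂ, φs z =
      Polynomial.eval z (Polynomial.reflect (N + 1) (Q.map (starRingEnd ℂ))))
    (hCD : ∀ z w : ℂ, (starRingEnd ℂ) w * z ≠ 1 →
      ∑ j ∈ Finset.range (N + 1), φ j z * (starRingEnd ℂ) (φ j w) =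
        ((starRingEnd ℂ) (φs w) * φs z -
          (starRingEnd ℂ) (φ (N + 1) w) * φ (N + 1) z) /
          (1 - (starRingEnd ℂ) w * z))
    (z : ℂ) (hz : ‖z‖ ≠ 1)
    :
    ∑ j ∈ Finset.range (N + 1), ‖deriv (φ j) z‖ ^ 2 =
      (‖deriv φs z‖ ^ 2 - ‖deriv (φ (N + 1)) z‖ ^ 2) /
        (1 - ‖z‖ ^ 2) +
      2 * (z * ∑ j ∈ Finset.range (N + 1),
            (starRingEnd ℂ) (φ j z) * deriv (φ j) z).re /
        (1 - ‖z‖ ^ 2) +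
      (∑ j ∈ Finset.range (N + 1), ‖φ j z‖ ^ 2) /
        (1 - ‖z‖ ^ 2) :=
  CD_unit_circle_B2_general N φ φs Q hpoly hφs hCD z hz
end

section
/- Let N ∈ ℕ and let φ_0,…,φ_{N+1} : ℂ → ℂ be polynomial functions, with φ*_{N+1} the reciprocal polynomial of φ_{N+1} of degree bound N+1 (the coefficient of z^j in φ*_{N+1} is the complex conjugate of the coefficient of z^{N+1−j} in φ_{N+1}), such that the Christoffel–Darboux formula on the unit circle holds: for all z, w ∈ ℂ with conj(w)·z ≠ 1, Σ_{j=0}^N φ_j(z)·conj(φ_j(w)) = (conj(φ*_{N+1}(w))·φ*_{N+1}(z) − conj(φ_{N+1}(w))·φ_{N+1}(z))/(1 − conj(w)·z). Then for every z ∈ ℂ with |z| ≠ 1, writing B_{0,N}(z) = Σ_{j=0}^N |φ_j(z)|², B_{1,N}(z) = Σ_{j=0}^N conj(φ_j(z))·φ_j′(z), B_{2,N}(z) = Σ_{j=0}^N |φ_j′(z)|², one has B_{0,N}(z)·B_{2,N}(z) − |B_{1,N}(z)|² = (|φ*_{N+1}(z)|² − |φ_{N+1}(z)|²)²/(1 −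 |z|²)⁴ − |φ*_{N+1}(z)·φ_{N+1}′(z) − φ*_{N+1}′(z)·φ_{N+1}(z)|²/(1 − |z|²)². -/
/-!
Substitute `u = conj w`: the kernel `K(z, u) = ∑ φⱼ(z) conj (φⱼ (conj u))` is then holomorphic in
both variables, and the Christoffel–Darboux formula becomes `(1 - u z) K = a♯(u) a(z) - b♯(u) b(z)`
with `a = φ*_{N+1}`, `b = φ_{N+1}`, `a♯ = conj ∘ a ∘ conj`; by continuity it holds for all `z, u`.
At `u = conj z` the sums `B₀`, `B₁`, `conj B₁`, `B₂` are `K`, `∂_z K`, `∂_u K`, `∂_z ∂_u K`.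
Differentiating the identity once in each variable expresses these four numbers through `a`, `b`
and their derivatives, and `B₀ B₂ - |B₁|²` then collapses by pure algebra.
-/

open Finset ComplexConjugate

theorem mul_sub_mul_eq_of_one_sub_mul_relations {u z A A' B B' a a' b b' k₀ k₁ k₂ k₃ : ℂ}
    (hs : 1 - u * z ≠ 0)
    (h₀ : (1 - u * z) * k₀ = A * a - B * b)
    (h₁ : (1 - u * z) * k₁ = A * a' - B * b' + u * k₀)
    (h₂ : (1 - u * z) * k₂ = A' * a - B' * b + z * k₀)
    (h₃ : (1 - u * z) * k₃ = A' * a' - B' * b' + k₀ + u * k₂ + z * k₁) :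
    k₀ * k₃ - k₁ * k₂ = (A * a - B * b) ^ 2 / (1 - u * z) ^ 4
      - (A * B' - A' * B) * (a * b' - a' * b) / (1 - u * z) ^ 2 := by
  have solve {k x : ℂ} (h : (1 - u * z) * k = x) : k = x / (1 - u * z) :=
    eq_div_of_mul_eq hs ((mul_comm _ _).trans h)
  rw [solve h₃, solve h₁, solve h₂, solve h₀]
  field_simp
  ring

theorem one_sub_mul_mul_deriv {c z : ℂ} {h k : ℂ → ℂ} (hh : DifferentiableAt ℂ h z)
    (hk : ∀ w, (1 - c * w) * h w = k w) :
    (1 - c * z) * deriv h z = deriv k z + c * h z := by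
  have hd := (((hasDerivAt_id' z).const_mul c).const_sub 1).fun_mul hh.hasDerivAt
  rw [funext hk] at hd
  rw [hd.deriv]
  ring

section Kernel

variable {ι : Type*} {s : Finset ι}

/-- The Christoffel–Darboux kernel `∑ gⱼ(z) conj (hⱼ w)` written in `u = conj w`, so that it is
holomorphic in `u`. -/
def cdKernel (s : Finset ι) (g h : ι → ℂ → ℂ) (z u : ℂ) : ℂ :=
  ∑ j ∈ s, g j z * (conj ∘ h j ∘ conj) u

theorem cdKernel_conj (g h : ι → ℂ → ℂ) (z : ℂ) :
    cdKernel s g h z (conj z) = ∑ j ∈ s, conj (h j z) * g j z := by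
  simp [cdKernel, mul_comm]

theorem conj_cdKernel_conj (g h : ι → ℂ → ℂ) (z : ℂ) :
    conj (cdKernel s g h z (conj z)) = cdKernel s h g z (conj z) := by
  simp [cdKernel_conj, mul_comm]

theorem hasDerivAt_cdKernel_left {g : ι → ℂ → ℂ} (h : ι → ℂ → ℂ) {z : ℂ} (u : ℂ)
    (hg : ∀ j ∈ s, DifferentiableAt ℂ (g j) z) :
    HasDerivAt (cdKernel s g h · u) (cdKernel s (fun j => deriv (g j)) h z u) z :=
  HasDerivAt.fun_sum fun j hj => (hg j hj).hasDerivAt.mul_const _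

theorem hasDerivAt_cdKernel_right (g : ι → ℂ → ℂ) {h : ι → ℂ → ℂ} (z : ℂ) {u : ℂ}
    (hh : ∀ j ∈ s, DifferentiableAt ℂ (h j) (conj u)) :
    HasDerivAt (cdKernel s g h z ·) (cdKernel s g (fun j => deriv (h j)) z u) u := by
  refine HasDerivAt.fun_sum fun j hj => ?_
  rw [← deriv_conj_conj]
  exact (differentiableAt_conj_conj_iff.2 (hh j hj)).hasDerivAt.const_mul _

variable {f : ι → ℂ → ℂ} {a b : ℂ → ℂ}

theorem one_sub_mul_cdKernel (hf : ∀ j ∈ s, Continuous (f j)) (ha : Continuous a)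
    (hb : Continuous b)
    (hCD : ∀ z w : ℂ, conj w * z ≠ 1 →
      ∑ j ∈ s, f j z * conj (f j w) =
        (conj (a w) * a z - conj (b w) * b z) / (1 - conj w * z))
    (z u : ℂ) :
    (1 - u * z) * cdKernel s f f z u =
      (conj ∘ a ∘ conj) u * a z - (conj ∘ b ∘ conj) u * b z := by
  have hdense : Dense {z : ℂ | u * z ≠ 1} :=
    (dense_compl_singleton u⁻¹).mono fun z (hz : z ≠ u⁻¹) huz =>
      hz (eq_inv_of_mul_eq_one_right huz)
  refine congrFun (Continuous.ext_on hdense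
    (f := fun z => (1 - u * z) * cdKernel s f f z u)
    (g := fun z => (conj ∘ a ∘ conj) u * a z - (conj ∘ b ∘ conj) u * b z) ?_ ?_ fun z hz => ?_) z
  · exact (continuous_const.sub (continuous_const.mul continuous_id)).mul
      (continuous_finsetSum _ fun j hj => (hf j hj).mul continuous_const)
  · fun_prop
  · have hz' : conj (conj u) * z ≠ 1 := by simpa using hz
    simp only [cdKernel, Function.comp_apply, hCD z _ hz', Complex.conj_conj]
    rw [mul_div_cancel₀ _ (sub_ne_zero.2 (Ne.symm hz))]

theorem one_sub_mul_cdKernel_deriv_left (hf : ∀ j ∈ s, Differentiable ℂ (f j))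
    (ha : Differentiable ℂ a) (hb : Differentiable ℂ b)
    (hK : ∀ z u, (1 - u * z) * cdKernel s f f z u =
      (conj ∘ a ∘ conj) u * a z - (conj ∘ b ∘ conj) u * b z) (z u : ℂ) :
    (1 - u * z) * cdKernel s (fun j => deriv (f j)) f z u =
      (conj ∘ a ∘ conj) u * deriv a z - (conj ∘ b ∘ conj) u * deriv b z +
        u * cdKernel s f f z u := by
  have hk := ((ha z).hasDerivAt.const_mul ((conj ∘ a ∘ conj) u)).fun_sub
    ((hb z).hasDerivAt.const_mul ((conj ∘ b ∘ conj) u))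
  have hK' := hasDerivAt_cdKernel_left f u fun j hj => hf j hj z
  have hE := one_sub_mul_mul_deriv hK'.differentiableAt (hK · u)
  rwa [hK'.deriv, hk.deriv] at hE

theorem one_sub_mul_cdKernel_deriv_right (hf : ∀ j ∈ s, Differentiable ℂ (f j))
    (ha : Differentiable ℂ a) (hb : Differentiable ℂ b)
    (hK : ∀ z u, (1 - u * z) * cdKernel s f f z u =
      (conj ∘ a ∘ conj) u * a z - (conj ∘ b ∘ conj) u * b z) (z u : ℂ) :
    (1 - u * z) * cdKernel s f (fun j => deriv (f j)) z u =
      (conj ∘ deriv a ∘ conj) u * a z - (conj ∘ deriv b ∘ conj) u * b z +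
        z * cdKernel s f f z u := by
  have hk := ((differentiableAt_conj_conj_iff.2 (ha (conj u))).hasDerivAt.mul_const (a z)).fun_sub
    ((differentiableAt_conj_conj_iff.2 (hb (conj u))).hasDerivAt.mul_const (b z))
  have hK' := hasDerivAt_cdKernel_right f z fun j hj => hf j hj (conj u)
  have hE := one_sub_mul_mul_deriv hK'.differentiableAt fun w => (mul_comm z w) ▸ hK z w
  rwa [hK'.deriv, hk.deriv, deriv_conj_conj, deriv_conj_conj, mul_comm z u] at hE

theorem one_sub_mul_cdKernel_deriv_left_right (hf : ∀ j ∈ s, Differentiable ℂ (f j))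
    (ha : Differentiable ℂ a) (hb : Differentiable ℂ b)
    (hK : ∀ z u, (1 - u * z) * cdKernel s f f z u =
      (conj ∘ a ∘ conj) u * a z - (conj ∘ b ∘ conj) u * b z) (z u : ℂ) :
    (1 - u * z) * cdKernel s (fun j => deriv (f j)) (fun j => deriv (f j)) z u =
      (conj ∘ deriv a ∘ conj) u * deriv a z - (conj ∘ deriv b ∘ conj) u * deriv b z +
        cdKernel s f f z u + u * cdKernel s f (fun j => deriv (f j)) z u +
        z * cdKernel s (fun j => deriv (f j)) f z u := by
  have hk := (((differentiableAt_conj_conj_iff.2 (ha (conj u))).hasDerivAt.mul_const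
    (deriv a z)).fun_sub ((differentiableAt_conj_conj_iff.2 (hb (conj u))).hasDerivAt.mul_const
    (deriv b z))).fun_add ((hasDerivAt_id' u).fun_mul
    (hasDerivAt_cdKernel_right f z fun j hj => hf j hj (conj u)))
  have hK' := hasDerivAt_cdKernel_right (fun j => deriv (f j)) z fun j hj => hf j hj (conj u)
  have hE := one_sub_mul_mul_deriv hK'.differentiableAt fun w =>
    (mul_comm z w) ▸ one_sub_mul_cdKernel_deriv_left hf ha hb hK z w
  rw [hK'.deriv, hk.deriv, deriv_conj_conj, deriv_conj_conj, mul_comm z u] at hE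
  linear_combination hE

theorem gram_det_eq_of_christoffelDarboux (hf : ∀ j ∈ s, Differentiable ℂ (f j))
    (ha : Differentiable ℂ a) (hb : Differentiable ℂ b)
    (hCD : ∀ z w : ℂ, conj w * z ≠ 1 →
      ∑ j ∈ s, f j z * conj (f j w) =
        (conj (a w) * a z - conj (b w) * b z) / (1 - conj w * z))
    (z : ℂ) (hz : ‖z‖ ≠ 1) :
    (∑ j ∈ s, ‖f j z‖ ^ 2) * (∑ j ∈ s, ‖deriv (f j) z‖ ^ 2) -
      ‖∑ j ∈ s, conj (f j z) * deriv (f j) z‖ ^ 2 =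
      (‖a z‖ ^ 2 - ‖b z‖ ^ 2) ^ 2 / (1 - ‖z‖ ^ 2) ^ 4 -
      ‖a z * deriv b z - deriv a z * b z‖ ^ 2 / (1 - ‖z‖ ^ 2) ^ 2 := by
  have hK := one_sub_mul_cdKernel (fun j hj => (hf j hj).continuous) ha.continuous
    hb.continuous hCD
  have hs : 1 - conj z * z ≠ 0 := by
    rw [Complex.conj_mul', sub_ne_zero, ne_comm]
    exact_mod_cast (pow_eq_one_iff_of_nonneg (norm_nonneg z) two_ne_zero).not.2 hz
  have key := mul_sub_mul_eq_of_one_sub_mul_relations hs (hK z (conj z))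
    (one_sub_mul_cdKernel_deriv_left hf ha hb hK z (conj z))
    (one_sub_mul_cdKernel_deriv_right hf ha hb hK z (conj z))
    (one_sub_mul_cdKernel_deriv_left_right hf ha hb hK z (conj z))
  simp only [Function.comp_apply, Complex.conj_conj] at key
  apply Complex.ofReal_injective
  push_cast
  simp only [← Complex.conj_mul']
  rw [← cdKernel_conj, ← cdKernel_conj, ← cdKernel_conj, conj_cdKernel_conj, map_sub, map_mul,
    map_mul]
  linear_combination key

end Kernel

theorem CD_unit_circle_B0B2_sub_B1sq_general
    (N : ℕ) (φ : ℕ → ℂ → ℂ) (φs : ℂ → ℂ) (Q : Polynomial ℂ)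
    (hpoly : ∀ j ≤ N + 1, ∃ q : Polynomial ℂ, ∀ z : ℂ, φ j z = Polynomial.eval z q)
    (hφs : ∀ z : ℂ, φs z =
      Polynomial.eval z (Polynomial.reflect (N + 1) (Q.map (starRingEnd ℂ))))
    (hCD : ∀ z w : ℂ, (starRingEnd ℂ) w * z ≠ 1 →
      ∑ j ∈ Finset.range (N + 1), φ j z * (starRingEnd ℂ) (φ j w) =
        ((starRingEnd ℂ) (φs w) * φs z -
          (starRingEnd ℂ) (φ (N + 1) w) * φ (N + 1) z) /
          (1 - (starRingEnd ℂ) w * z))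
    (z : ℂ) (hz : ‖z‖ ≠ 1)
    :
    (∑ j ∈ Finset.range (N + 1), ‖φ j z‖ ^ 2) *
        (∑ j ∈ Finset.range (N + 1), ‖deriv (φ j) z‖ ^ 2) -
      ‖∑ j ∈ Finset.range (N + 1),
          (starRingEnd ℂ) (φ j z) * deriv (φ j) z‖ ^ 2 =
      (‖φs z‖ ^ 2 - ‖φ (N + 1) z‖ ^ 2) ^ 2 /
        (1 - ‖z‖ ^ 2) ^ 4 -
      ‖φs z * deriv (φ (N + 1)) z - deriv φs z * φ (N + 1) z‖ ^ 2 /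
        (1 - ‖z‖ ^ 2) ^ 2 := by
  have hφ : ∀ j ≤ N + 1, Differentiable ℂ (φ j) := fun j hj => by
    obtain ⟨q, hq⟩ := hpoly j hj
    exact funext hq ▸ q.differentiable
  exact gram_det_eq_of_christoffelDarboux
    (fun j hj => hφ j (mem_range.1 hj).le)
    (funext hφs ▸ Polynomial.differentiable _) (hφ _ le_rfl) hCD z hz

/-- `B₀,N·B₂,N − |B₁,N|²` for polynomials orthonormal on the unit circle. -/
theorem CD_unit_circle_B0B2_sub_B1sq
    (N : ℕ) (φ : ℕ → ℂ → ℂ) (φs : ℂ → ℂ) (Q : Polynomial ℂ)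
    (hpoly : ∀ j ≤ N + 1, ∃ q : Polynomial ℂ, ∀ z : ℂ, φ j z = Polynomial.eval z q)
    (hQ : ∀ z : ℂ, φ (N + 1) z = Polynomial.eval z Q)
    (hφs : ∀ z : ℂ, φs z =
      Polynomial.eval z (Polynomial.reflect (N + 1) (Q.map (starRingEnd ℂ))))
    (hCD : ∀ z w : ℂ, (starRingEnd ℂ) w * z ≠ 1 →
      ∑ j ∈ Finset.range (N + 1), φ j z * (starRingEnd ℂ) (φ j w) =
        ((starRingEnd ℂ) (φs w) * φs z -
          (starRingEnd ℂ) (φ (N + 1) w) * φ (N + 1) z) /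
          (1 - (starRingEnd ℂ) w * z))
    (z : ℂ) (hz : ‖z‖ ≠ 1)
    :
    (∑ j ∈ Finset.range (N + 1), ‖φ j z‖ ^ 2) *
        (∑ j ∈ Finset.range (N + 1), ‖deriv (φ j) z‖ ^ 2) -
      ‖∑ j ∈ Finset.range (N + 1),
          (starRingEnd ℂ) (φ j z) * deriv (φ j) z‖ ^ 2 =
      (‖φs z‖ ^ 2 - ‖φ (N + 1) z‖ ^ 2) ^ 2 /
        (1 - ‖z‖ ^ 2) ^ 4 -
      ‖φs z * deriv (φ (N + 1)) z - deriv φs z * φ (N + 1) z‖ ^ 2 /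
        (1 - ‖z‖ ^ 2) ^ 2 :=
  CD_unit_circle_B0B2_sub_B1sq_general N φ φs Q hpoly hφs hCD z hz
end

section
/- Let N ∈ ℕ and let φ_0,…,φ_{N+1} : ℂ → ℂ be polynomial functions, with φ*_{N+1} the reciprocal polynomial of φ_{N+1} of degree bound N+1 (the coefficient of z^j in φ*_{N+1} is the complex conjugate of the coefficient of z^{N+1−j} in φ_{N+1}), such that the Christoffel–Darboux formula on the unit circle holds: for all z, w ∈ ℂ with conj(w)·z ≠ 1, Σ_{j=0}^N φ_j(z)·conj(φ_j(w)) = (conj(φ*_{N+1}(w))·φ*_{N+1}(z) − conj(φ_{N+1}(w))·φ_{N+1}(z))/(1 − conj(w)·z). Then for every z ∈ ℂ with |z| ≠ 1 and |φ*_{N+1}(z)|² − |φ_{N+1}(z)|² ≠ 0, writing B_{0,N}(z) = Σ_{j=0}^N |φ_j(z)|² and B_{1,N}(z) = Σ_{j=0}^N conj(φ_j(z))·φ_j′(z), one has |B_{1,N}(z)|²/B_{0,N}(z)³ = (1 − |z|²)·|conj(φ*_{N+1}′(z))·φ*_{N+1}(z) − conj(φ_{N+1}′(z))·φ_{N+1}(z)|²/(|φ*_{N+1}(z)|²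 − |φ_{N+1}(z)|²)³ + 2·Re(z·(φ*_{N+1}′(z)·conj(φ*_{N+1}(z)) − φ_{N+1}′(z)·conj(φ_{N+1}(z))))/(|φ*_{N+1}(z)|² − |φ_{N+1}(z)|²)² + |z|²/((1 − |z|²)·(|φ*_{N+1}(z)|² − |φ_{N+1}(z)|²)). -/
/-!
Off the circle `|z| = 1` the Christoffel–Darboux formula can be evaluated on the
diagonal `x = w = z`, which gives `B₀ = A / (1 - |z|²)` with `A = |φ*(z)|² - |φ(z)|²`, and, for
fixed `w = z`, differentiated in `x` at `x = z`, which gives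
`B₁ = (E (1 - |z|²) + A z̄) / (1 - |z|²)²` with `E = conj (φ*(z)) φ*'(z) - conj (φ(z)) φ'(z)`.
Expanding `|B₁|² / B₀³` is then elementary algebra.
-/

open Finset ComplexConjugate Filter Topology

section ChristoffelDarboux

variable {f g : ℂ → ℂ} {z : ℂ}

theorem hasDerivAt_christoffelDarboux_quotient (hf : DifferentiableAt ℂ f z)
    (hg : DifferentiableAt ℂ g z) (hz : conj z * z ≠ 1) :
    HasDerivAt (fun x => (conj (f z) * f x - conj (g z) * g x) / (1 - conj z * x))
      (((conj (f z) * deriv f z - conj (g z) * deriv g z) * (1 - conj z * z) +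
          (conj (f z) * f z - conj (g z) * g z) * conj z) / (1 - conj z * z) ^ 2) z := by
  have hnum :=
    (hf.hasDerivAt.const_mul (conj (f z))).fun_sub (hg.hasDerivAt.const_mul (conj (g z)))
  have hden := ((hasDerivAt_id z).const_mul (conj z)).const_sub 1
  refine (hnum.fun_div hden (sub_ne_zero.2 hz.symm)).congr_deriv ?_
  simp only [id, mul_one]
  ring

variable {ι : Type*} {s : Finset ι} {φ : ι → ℂ → ℂ}

theorem sum_sq_norm_eq_of_christoffelDarboux
    (hCD : ∑ i ∈ s, φ i z * conj (φ i z) =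
      (conj (f z) * f z - conj (g z) * g z) / (1 - conj z * z)) :
    ∑ i ∈ s, ‖φ i z‖ ^ 2 = (‖f z‖ ^ 2 - ‖g z‖ ^ 2) / (1 - ‖z‖ ^ 2) := by
  simp only [Complex.mul_conj', Complex.conj_mul'] at hCD
  exact_mod_cast hCD

theorem sum_conj_mul_deriv_eq_of_christoffelDarboux (hφ : ∀ i ∈ s, DifferentiableAt ℂ (φ i) z)
    (hf : DifferentiableAt ℂ f z) (hg : DifferentiableAt ℂ g z) (hz : conj z * z ≠ 1)
    (hCD : ∀ᶠ x in 𝓝 z, ∑ i ∈ s, φ i x * conj (φ i z) =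
      (conj (f z) * f x - conj (g z) * g x) / (1 - conj z * x)) :
    ∑ i ∈ s, conj (φ i z) * deriv (φ i) z =
      ((conj (f z) * deriv f z - conj (g z) * deriv g z) * (1 - ‖z‖ ^ 2) +
          (‖f z‖ ^ 2 - ‖g z‖ ^ 2 : ℝ) * conj z) / (1 - ‖z‖ ^ 2) ^ 2 := by
  have hsum : HasDerivAt (fun x => ∑ i ∈ s, φ i x * conj (φ i z))
      (∑ i ∈ s, deriv (φ i) z * conj (φ i z)) z :=
    HasDerivAt.fun_sum fun i hi => (hφ i hi).hasDerivAt.mul_const _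
  have hquot := (hasDerivAt_christoffelDarboux_quotient hf hg hz).congr_of_eventuallyEq hCD
  simp only [Complex.conj_mul'] at hquot
  push_cast
  simp only [mul_comm (conj (φ _ z))]
  exact hsum.unique hquot

end ChristoffelDarboux

theorem norm_sq_add_mul_conj (E z : ℂ) (t a : ℝ) :
    ‖E * t + a * conj z‖ ^ 2 = t ^ 2 * ‖E‖ ^ 2 + 2 * t * a * (z * E).re + a ^ 2 * ‖z‖ ^ 2 := by
  simp only [Complex.sq_norm, Complex.normSq_apply, Complex.add_re, Complex.add_im,
    Complex.mul_re, Complex.mul_im, Complex.ofReal_re, Complex.ofReal_im, Complex.conj_re,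
    Complex.conj_im]
  ring

theorem christoffelDarboux_ratio_eq {z E : ℂ} (A : ℝ) (hz : ‖z‖ ≠ 1) :
    ‖(E * (1 - ‖z‖ ^ 2) + A * conj z) / (1 - ‖z‖ ^ 2) ^ 2‖ ^ 2 / (A / (1 - ‖z‖ ^ 2)) ^ 3 =
      (1 - ‖z‖ ^ 2) * ‖E‖ ^ 2 / A ^ 3 + 2 * (z * E).re / A ^ 2 +
        ‖z‖ ^ 2 / ((1 - ‖z‖ ^ 2) * A) := by
  have ht : 1 - ‖z‖ ^ 2 ≠ 0 := by
    rw [sub_ne_zero, ne_comm, Ne, pow_eq_one_iff_of_nonneg (norm_nonneg z) two_ne_zero]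
    exact hz
  have hcast : (1 - (‖z‖ : ℂ) ^ 2) = ((1 - ‖z‖ ^ 2 : ℝ) : ℂ) := by push_cast; rfl
  rw [hcast, norm_div, div_pow, norm_sq_add_mul_conj, norm_pow, Complex.norm_real,
    Real.norm_eq_abs, pow_right_comm, sq_abs]
  rcases eq_or_ne A 0 with rfl | hA
  · simp
  · field_simp

theorem CD_unit_circle_B1sq_div_B0cubed_general
    (N : ℕ) (φ : ℕ → ℂ → ℂ) (φs : ℂ → ℂ) (Q : Polynomial ℂ)
    (hpoly : ∀ j ≤ N + 1, ∃ q : Polynomial ℂ, ∀ z : ℂ, φ j z = Polynomial.eval z q)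
    (hφs : ∀ z : ℂ, φs z =
      Polynomial.eval z (Polynomial.reflect (N + 1) (Q.map (starRingEnd ℂ))))
    (hCD : ∀ z w : ℂ, (starRingEnd ℂ) w * z ≠ 1 →
      ∑ j ∈ Finset.range (N + 1), φ j z * (starRingEnd ℂ) (φ j w) =
        ((starRingEnd ℂ) (φs w) * φs z -
          (starRingEnd ℂ) (φ (N + 1) w) * φ (N + 1) z) /
          (1 - (starRingEnd ℂ) w * z))
    (z : ℂ) (hz : ‖z‖ ≠ 1) :
    ‖∑ j ∈ Finset.range (N + 1),
        (starRingEnd ℂ) (φ j z) * deriv (φ j) z‖ ^ 2 /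
      (∑ j ∈ Finset.range (N + 1), ‖φ j z‖ ^ 2) ^ 3 =
      (1 - ‖z‖ ^ 2) *
          ‖(starRingEnd ℂ) (deriv φs z) * φs z -
            (starRingEnd ℂ) (deriv (φ (N + 1)) z) * φ (N + 1) z‖ ^ 2 /
        (‖φs z‖ ^ 2 - ‖φ (N + 1) z‖ ^ 2) ^ 3 +
      2 * (z * (deriv φs z * (starRingEnd ℂ) (φs z) -
            deriv (φ (N + 1)) z * (starRingEnd ℂ) (φ (N + 1) z))).re /
        (‖φs z‖ ^ 2 - ‖φ (N + 1) z‖ ^ 2) ^ 2 +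
      ‖z‖ ^ 2 /
        ((1 - ‖z‖ ^ 2) *
          (‖φs z‖ ^ 2 - ‖φ (N + 1) z‖ ^ 2)) := by
  have hφ : ∀ j ≤ N + 1, Differentiable ℂ (φ j) := fun j hj => by
    obtain ⟨q, hq⟩ := hpoly j hj
    exact funext hq ▸ q.differentiable
  have hφs' : Differentiable ℂ φs := funext hφs ▸ Polynomial.differentiable _
  have hzz : conj z * z ≠ 1 := by
    rw [Complex.conj_mul']
    exact_mod_cast (pow_eq_one_iff_of_nonneg (norm_nonneg z) two_ne_zero).not.2 hz
  have hB₀ := sum_sq_norm_eq_of_christoffelDarboux (hCD z z hzz)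
  have hB₁ := sum_conj_mul_deriv_eq_of_christoffelDarboux
    (fun j hj => (hφ j (mem_range.1 hj).le).differentiableAt) hφs'.differentiableAt
    (hφ (N + 1) le_rfl).differentiableAt hzz
    (((continuous_const.mul continuous_id).tendsto z).eventually_ne hzz |>.mono
      fun x hx => hCD x z hx)
  rw [hB₀, hB₁, christoffelDarboux_ratio_eq _ hz]
  congr 4
  · rw [← Complex.norm_conj, map_sub, map_mul, map_mul, Complex.conj_conj, Complex.conj_conj,
      mul_comm, mul_comm (φ (N + 1) z)]
  · rw [mul_comm (conj (φs z)), mul_comm (conj (φ (N + 1) z))]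

/-- `|B₁,N(z)|²/B₀,N(z)³` for polynomials orthonormal on the unit circle. -/
theorem CD_unit_circle_B1sq_div_B0cubed
    (N : ℕ) (φ : ℕ → ℂ → ℂ) (φs : ℂ → ℂ) (Q : Polynomial ℂ)
    (hpoly : ∀ j ≤ N + 1, ∃ q : Polynomial ℂ, ∀ z : ℂ, φ j z = Polynomial.eval z q)
    (hQ : ∀ z : ℂ, φ (N + 1) z = Polynomial.eval z Q)
    (hφs : ∀ z : ℂ, φs z =
      Polynomial.eval z (Polynomial.reflect (N + 1) (Q.map (starRingEnd ℂ))))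
    (hCD : ∀ z w : ℂ, (starRingEnd ℂ) w * z ≠ 1 →
      ∑ j ∈ Finset.range (N + 1), φ j z * (starRingEnd ℂ) (φ j w) =
        ((starRingEnd ℂ) (φs w) * φs z -
          (starRingEnd ℂ) (φ (N + 1) w) * φ (N + 1) z) /
          (1 - (starRingEnd ℂ) w * z))
    (z : ℂ) (hz : ‖z‖ ≠ 1)
    (hA : ‖φs z‖ ^ 2 - ‖φ (N + 1) z‖ ^ 2 ≠ 0) :
    ‖∑ j ∈ Finset.range (N + 1),
        (starRingEnd ℂ) (φ j z) * deriv (φ j) z‖ ^ 2 /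
      (∑ j ∈ Finset.range (N + 1), ‖φ j z‖ ^ 2) ^ 3 =
      (1 - ‖z‖ ^ 2) *
          ‖(starRingEnd ℂ) (deriv φs z) * φs z -
            (starRingEnd ℂ) (deriv (φ (N + 1)) z) * φ (N + 1) z‖ ^ 2 /
        (‖φs z‖ ^ 2 - ‖φ (N + 1) z‖ ^ 2) ^ 3 +
      2 * (z * (deriv φs z * (starRingEnd ℂ) (φs z) -
            deriv (φ (N + 1)) z * (starRingEnd ℂ) (φ (N + 1) z))).re /
        (‖φs z‖ ^ 2 - ‖φ (N + 1) z‖ ^ 2) ^ 2 +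
      ‖z‖ ^ 2 /
        ((1 - ‖z‖ ^ 2) *
          (‖φs z‖ ^ 2 - ‖φ (N + 1) z‖ ^ 2)) :=
  CD_unit_circle_B1sq_div_B0cubed_general N φ φs Q hpoly hφs hCD z hz
end
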